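/- Let ξ be an irrational real number with continued fraction expansion [a₀, a₁, a₂, …] and convergents p_n/q_n. Then the irrationality exponent of ξ satisfies μ(ξ) = limsup_{n→∞} (2 + log a_{n+1} / log q_n). -/

import Mathlib

open Filter

noncomputable section

/-- The `j`-th digit (j ≥ 1) of the base-`b` expansion of the fractional part of `ξ`. -/
def digit (b : ℕ) (ξ : ℝ) (j : ℕ) : ℕ := (⌊Int.fract ξ * (b : ℝ) ^ j⌋ % (b : ℤ)).toNat

/-- The digit sequence `a₁ a₂ a₃ ⋯` of the base-`b` expansion of `ξ` (index `n` gives `a_{n+1}`). -/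
def digitSeq (b : ℕ) (ξ : ℝ) (n : ℕ) : ℕ := digit b ξ (n + 1)

/-- Subword complexity of an infinite word. -/
def wordComplexity {A : Type*} (a : ℕ → A) (n : ℕ) : ℕ :=
  Set.ncard {w : Fin n → A | ∃ j : ℕ, ∀ i : Fin n, w i = a (j + i)}

/-- Subword complexity `p(ξ, b, n)` of the base-`b` expansion of `ξ`. -/
def realComplexity (b : ℕ) (ξ : ℝ) (n : ℕ) : ℕ := wordComplexity (digitSeq b ξ) n

/-- Exponents `ρ` for which `|ξ - p/q| < q^(-ρ)` has infinitely many rational solutions. -/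
def muSet (ξ : ℝ) : Set ℝ :=
  {ρ : ℝ | {r : ℚ | |ξ - (r : ℝ)| < 1 / (r.den : ℝ) ^ ρ}.Infinite}

/-- The irrationality exponent of a real number. -/
def mu (ξ : ℝ) : EReal := sSup ((fun ρ : ℝ => (ρ : EReal)) '' muSet ξ)

/-- Fractional power `V^x` of a finite word. -/
def wordPow {A : Type*} (V : List A) (x : ℝ) : List A :=
  (List.replicate ⌊x⌋₊ V).flatten ++ V.take ⌈(x - (⌊x⌋₊ : ℝ)) * (V.length : ℝ)⌉₊

/-- The prefix of length `n` of an infinite word. -/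
def prefixWord {A : Type*} (a : ℕ → A) (n : ℕ) : List A := (List.range n).map a

/-- `L` is a prefix of the infinite word `a`. -/
def IsPrefixSeq {A : Type*} (a : ℕ → A) (L : List A) : Prop := L = prefixWord a L.length

/-- The set of exponents defining the Diophantine exponent of an infinite word. -/
def dioSet {A : Type*} (a : ℕ → A) : Set ℝ :=
  {ρ : ℝ | ∀ m : ℕ, ∃ (U V : List A) (w : ℝ), V ≠ [] ∧ 0 < w ∧
    m ≤ (U ++ wordPow V w).length ∧ IsPrefixSeq a (U ++ wordPow V w) ∧
    ρ ≤ ((U ++ wordPow V w).length : ℝ) / ((U ++ V).length : ℝ)}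

/-- The Diophantine exponent of an infinite word. -/
def dio {A : Type*} (a : ℕ → A) : EReal := sSup ((fun ρ : ℝ => (ρ : EReal)) '' dioSet a)

/-- The set of exponents defining the initial critical exponent of an infinite word. -/
def iceSet {A : Type*} (a : ℕ → A) : Set ℝ :=
  {ρ : ℝ | 0 < ρ ∧ ∀ m : ℕ, ∃ n : ℕ, m ≤ n ∧ 0 < n ∧
    IsPrefixSeq a (wordPow (prefixWord a n) ρ)}

/-- The initial critical exponent of an infinite word. -/
def ice {A : Type*} (a : ℕ → A) : EReal := sSup ((fun ρ : ℝ => (ρ : EReal)) '' iceSet a)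

/-- An infinite word is eventually periodic. -/
def EventuallyPeriodic {A : Type*} (a : ℕ → A) : Prop :=
  ∃ T : ℕ, 0 < T ∧ ∃ N : ℕ, ∀ n : ℕ, N ≤ n → a (n + T) = a n

/-- A Sturmian word: an infinite binary word of subword complexity `n + 1`. -/
def IsSturmian (s : ℕ → Fin 2) : Prop := ∀ n : ℕ, 1 ≤ n → wordComplexity s n = n + 1

/-- The slope of a binary word: the frequency of the letter `1`. -/
def HasSlope (s : ℕ → Fin 2) (α : ℝ) : Prop :=
  Tendsto (fun n : ℕ => (((prefixWord s n).count 1 : ℕ) : ℝ) / (n : ℝ)) atTop (nhds α)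

/-- The iterated Gauss map orbit: complete quotients of the continued fraction of `ξ`. -/
def cfTail (ξ : ℝ) : ℕ → ℝ
  | 0 => ξ
  | n + 1 => 1 / Int.fract (cfTail ξ n)

/-- The `n`-th partial quotient of the continued fraction expansion of `ξ`. -/
def partialQuotient (ξ : ℝ) (n : ℕ) : ℤ := ⌊cfTail ξ n⌋


/-!
The convergents `p_n / q_n` of `ξ` satisfy
`1 / ((a_{n+1} + 2) q_n²) ≤ |ξ - p_n / q_n| ≤ 1 / (a_{n+1} q_n²)`, so `p_n / q_n` approximates `ξ`
to the exponent `2 + log a_{n+1} / log q_n`, up to a bounded factor that is negligible as `q_n → ∞`.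
This gives `μ(ξ) ≥ limsup`. Conversely, by Legendre's theorem every rational `r` with
`|ξ - r| < 1 / (2 r.den²)` is a convergent, so for `ρ > limsup` only finitely many rationals can
satisfy `|ξ - r| < r.den ^ (-ρ)`. The `q_n` are the denominators `dens n` of Mathlib's
`GenContFract.of ξ`.
-/

open GenContFract

lemma irrational_cfTail {ξ : ℝ} (hξ : Irrational ξ) (n : ℕ) : Irrational (cfTail ξ n) := by
  induction n with
  | zero => exact hξ
  | succ n ih => simpa [cfTail] using (ih.sub_intCast ⌊cfTail ξ n⌋).inv

lemma fract_cfTail_ne_zero {ξ : ℝ} (hξ : Irrational ξ) (n : ℕ) : Int.fract (cfTail ξ n) ≠ 0 :=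
  Int.fract_ne_zero_iff.2 fun ⟨m, hm⟩ => (irrational_cfTail hξ n).ne_int m hm.symm

lemma intFractPair_stream_eq_of_cfTail {ξ : ℝ} (hξ : Irrational ξ) (n : ℕ) :
    IntFractPair.stream ξ n = some (IntFractPair.of (cfTail ξ n)) := by
  induction n with
  | zero => rfl
  | succ n ih =>
    rw [IntFractPair.stream_succ_of_some ih (fract_cfTail_ne_zero hξ n), cfTail, one_div]
    rfl

lemma of_s_get?_eq_partialQuotient {ξ : ℝ} (hξ : Irrational ξ) (n : ℕ) :
    (GenContFract.of ξ).s.get? n = some ⟨1, (partialQuotient ξ (n + 1) : ℝ)⟩ :=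
  get?_of_eq_some_of_succ_get?_intFractPair_stream (intFractPair_stream_eq_of_cfTail hξ (n + 1))

lemma of_not_terminatedAt {ξ : ℝ} (hξ : Irrational ξ) (n : ℕ) :
    ¬(GenContFract.of ξ).TerminatedAt n := by
  simp [terminatedAt_iff_s_none, of_s_get?_eq_partialQuotient hξ n]

lemma one_le_partialQuotient_succ {ξ : ℝ} (hξ : Irrational ξ) (n : ℕ) :
    (1 : ℝ) ≤ partialQuotient ξ (n + 1) :=
  of_one_le_get?_partDen (partDen_eq_s_b (of_s_get?_eq_partialQuotient hξ n))

lemma of_dens_one {ξ : ℝ} (hξ : Irrational ξ) :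
    (GenContFract.of ξ).dens 1 = partialQuotient ξ 1 :=
  first_den_eq (of_s_get?_eq_partialQuotient hξ 0)

lemma of_dens_add_two {ξ : ℝ} (hξ : Irrational ξ) (n : ℕ) :
    (GenContFract.of ξ).dens (n + 2) =
      partialQuotient ξ (n + 2) * (GenContFract.of ξ).dens (n + 1) +
        (GenContFract.of ξ).dens n := by
  rw [dens_recurrence (of_s_get?_eq_partialQuotient hξ (n + 1)) rfl rfl, one_mul]

lemma of_dens_eq_of_recurrence {ξ : ℝ} (hξ : Irrational ξ) (q : ℕ → ℤ) (hq0 : q 0 = 1)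
    (hq1 : q 1 = partialQuotient ξ 1)
    (hqrec : ∀ n : ℕ, q (n + 2) = partialQuotient ξ (n + 2) * q (n + 1) + q n) (n : ℕ) :
    (GenContFract.of ξ).dens n = q n := by
  induction n using Nat.twoStepInduction with
  | zero => simp [zeroth_den_eq_one, hq0]
  | one => rw [of_dens_one hξ, hq1]
  | more n ih₀ ih₁ => rw [of_dens_add_two hξ, ih₀, ih₁, hqrec]; push_cast; ring

lemma exists_int_eq_of_conts {ξ : ℝ} (hξ : Irrational ξ) (n : ℕ) :
    ∃ P Q : ℤ, (GenContFract.of ξ).conts n = ⟨P, Q⟩ := by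
  induction n using Nat.twoStepInduction with
  | zero => exact ⟨⌊ξ⌋, 1, by simp [zeroth_cont_eq_h_one, of_h_eq_floor]⟩
  | one =>
    refine ⟨partialQuotient ξ 1 * ⌊ξ⌋ + 1, partialQuotient ξ 1, ?_⟩
    rw [first_cont_eq (of_s_get?_eq_partialQuotient hξ 0), of_h_eq_floor]
    push_cast; rfl
  | more n ih₀ ih₁ =>
    obtain ⟨P₀, Q₀, h₀⟩ := ih₀
    obtain ⟨P₁, Q₁, h₁⟩ := ih₁
    refine ⟨partialQuotient ξ (n + 2) * P₁ + P₀, partialQuotient ξ (n + 2) * Q₁ + Q₀, ?_⟩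
    rw [conts_recurrence (of_s_get?_eq_partialQuotient hξ (n + 1)) h₀ h₁]
    push_cast; simp

lemma one_le_of_dens {ξ : ℝ} (hξ : Irrational ξ) (n : ℕ) : 1 ≤ (GenContFract.of ξ).dens n := by
  have h := succ_nth_fib_le_of_nth_den (v := ξ) (Or.inr (of_not_terminatedAt hξ (n - 1)))
  have hfib : (1 : ℝ) ≤ Nat.fib (n + 1) := by exact_mod_cast Nat.fib_pos.2 n.succ_pos
  exact hfib.trans h

lemma of_dens_add_one_le {ξ : ℝ} (hξ : Irrational ξ) (n : ℕ) :
    (GenContFract.of ξ).dens (n + 1) + 1 ≤ (GenContFract.of ξ).dens (n + 2) := by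
  rw [of_dens_add_two hξ]
  nlinarith [one_le_partialQuotient_succ hξ (n + 1), one_le_of_dens hξ n,
    one_le_of_dens hξ (n + 1)]

lemma natCast_le_of_dens {ξ : ℝ} (hξ : Irrational ξ) (n : ℕ) :
    (n : ℝ) ≤ (GenContFract.of ξ).dens n := by
  induction n using Nat.twoStepInduction with
  | zero => exact_mod_cast (one_le_of_dens hξ 0).trans' zero_le_one
  | one => simpa using one_le_of_dens hξ 1
  | more n _ ih => push_cast at ih ⊢; linarith [of_dens_add_one_le hξ n]

lemma strictMonoOn_of_dens {ξ : ℝ} (hξ : Irrational ξ) :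
    StrictMonoOn (GenContFract.of ξ).dens (Set.Ici 1) := by
  refine strictMonoOn_of_lt_succ Set.ordConnected_Ici fun n _ hn _ => ?_
  obtain ⟨m, rfl⟩ := Nat.exists_eq_add_of_le' (Set.mem_Ici.1 hn)
  show (GenContFract.of ξ).dens (m + 1) < (GenContFract.of ξ).dens (m + 2)
  linarith [of_dens_add_one_le hξ m]

lemma one_lt_of_dens {ξ : ℝ} (hξ : Irrational ξ) {n : ℕ} (hn : 2 ≤ n) :
    1 < (GenContFract.of ξ).dens n := by
  have h : (2 : ℝ) ≤ n := by exact_mod_cast hn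
  linarith [natCast_le_of_dens hξ n]

lemma tendsto_of_dens_atTop {ξ : ℝ} (hξ : Irrational ξ) :
    Tendsto (GenContFract.of ξ).dens atTop atTop :=
  tendsto_atTop_mono (natCast_le_of_dens hξ) tendsto_natCast_atTop_atTop

lemma den_convergent_eq_of_dens {ξ : ℝ} (hξ : Irrational ξ) (n : ℕ) :
    ((ξ.convergent n).den : ℝ) = (GenContFract.of ξ).dens n := by
  obtain ⟨P, Q, hPQ⟩ := exists_int_eq_of_conts hξ n
  obtain ⟨P', Q', hPQ'⟩ := exists_int_eq_of_conts hξ (n + 1)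
  have hnum (k : ℕ) : (GenContFract.of ξ).nums k = ((GenContFract.of ξ).conts k).a := rfl
  have hden (k : ℕ) : (GenContFract.of ξ).dens k = ((GenContFract.of ξ).conts k).b := rfl
  have hdet : P * Q' - Q * P' = (-1) ^ (n + 1) := by
    have h := SimpContFract.determinant (s := SimpContFract.of ξ) (of_not_terminatedAt hξ n)
    simp only [SimpContFract.of, hnum, hden, hPQ, hPQ'] at h
    exact_mod_cast h
  have hcop : IsCoprime P Q := by
    rcases neg_one_pow_eq_or ℤ (n + 1) with h | h <;> rw [h] at hdet
    · exact ⟨Q', -P', by linear_combination hdet⟩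
    · exact ⟨-Q', P', by linear_combination -hdet⟩
  have hQ : (1 : ℝ) ≤ Q := by simpa [hden, hPQ] using one_le_of_dens hξ n
  have hconv : ξ.convergent n = (P / Q : ℚ) := by
    apply Rat.cast_injective (α := ℝ)
    rw [← Real.convs_eq_convergent, conv_eq_num_div_den, hnum, hden, hPQ]
    push_cast; rfl
  have h := Rat.den_div_eq_of_coprime (by exact_mod_cast hQ) (Int.isCoprime_iff_gcd_eq_one.1 hcop)
  rw [hconv, hden, hPQ]
  change _ = ((Q : ℤ) : ℝ)
  exact_mod_cast h

lemma abs_sub_convergent_le {ξ : ℝ} (hξ : Irrational ξ) (n : ℕ) :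
    |ξ - ξ.convergent n| ≤
      1 / (partialQuotient ξ (n + 1) * (GenContFract.of ξ).dens n ^ 2) := by
  rw [← Real.convs_eq_convergent, sq, ← mul_assoc]
  exact abs_sub_convergents_le' (partDen_eq_s_b (of_s_get?_eq_partialQuotient hξ n))

lemma one_div_le_abs_sub_convergent {ξ : ℝ} (hξ : Irrational ξ) (n : ℕ) :
    1 / ((partialQuotient ξ (n + 1) + 2) * (GenContFract.of ξ).dens n ^ 2) ≤
      |ξ - ξ.convergent n| := by
  set B := (GenContFract.of ξ).dens n
  set pB := ((GenContFract.of ξ).contsAux n).b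
  have hB : ((GenContFract.of ξ).contsAux (n + 1)).b = B := rfl
  have hpB : 0 ≤ pB ∧ pB ≤ B := by
    rcases n with _ | m
    · simp [pB, B, zeroth_den_eq_one, zeroth_contAux_eq_one_zero]
    · exact ⟨(one_le_of_dens hξ m).trans' zero_le_one, of_den_mono⟩
  have htail : cfTail ξ (n + 1) < partialQuotient ξ (n + 1) + 1 := Int.lt_floor_add_one _
  have htail_pos : 0 < cfTail ξ (n + 1) := by
    rw [cfTail, one_div]
    exact inv_pos.2 ((Int.fract_nonneg _).lt_of_ne' (fract_cfTail_ne_zero hξ n))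
  have h : ξ - (GenContFract.of ξ).convs n = (-1) ^ n / (B * (cfTail ξ (n + 1) * B + pB)) := by
    have h := sub_convs_eq (intFractPair_stream_eq_of_cfTail hξ n)
    simp only [IntFractPair.of, fract_cfTail_ne_zero hξ n, if_false, hB] at h
    rwa [← one_div, ← cfTail] at h
  have hB1 : 1 ≤ B := one_le_of_dens hξ n
  have hpos : 0 < B * (cfTail ξ (n + 1) * B + pB) :=
    mul_pos (by linarith) (by nlinarith [hpB.1])
  rw [← Real.convs_eq_convergent, h, abs_div, abs_neg_one_pow, abs_of_pos hpos]
  apply one_div_le_one_div_of_le hpos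
  nlinarith [mul_le_mul_of_nonneg_right htail.le (zero_le_one.trans hB1)]

lemma rpow_two_add_log_div_log {Q a : ℝ} (hQ : 0 < Q) (hQ1 : Q ≠ 1) (ha : 0 < a) :
    Q ^ (2 + Real.log a / Real.log Q) = a * Q ^ 2 := by
  rw [Real.rpow_add hQ, Real.rpow_two, Real.rpow_def_of_pos hQ,
    mul_div_cancel₀ _ (Real.log_ne_zero_of_pos_of_ne_one hQ hQ1), Real.exp_log ha, mul_comm]

lemma finite_setOf_den_le_abs_sub_lt_one (ξ : ℝ) (M : ℕ) :
    {r : ℚ | r.den ≤ M ∧ |ξ - r| < 1}.Finite := by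
  set K : ℤ := ⌈(|ξ| + 1) * M⌉
  refine ((Set.finite_Icc (-K) K).prod (Set.finite_Iic M)).preimage
    (f := fun r : ℚ => (r.num, r.den))
    (fun r _ s _ h => Rat.ext (congrArg Prod.fst h) (congrArg Prod.snd h)) |>.subset ?_
  rintro r ⟨hden, hr⟩
  have hr' : |(r : ℝ)| ≤ |ξ| + 1 := by
    linarith [abs_sub_abs_le_abs_sub (r : ℝ) ξ, abs_sub_comm (r : ℝ) ξ]
  have hnum : |(r.num : ℝ)| ≤ (|ξ| + 1) * M := by
    have hcast : (r.num : ℝ) = r * r.den := by rw [Rat.cast_def]; field_simp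
    rw [hcast, abs_mul, Nat.abs_cast]
    gcongr
  have hK : ((|r.num| : ℤ) : ℝ) ≤ K := by
    rw [Int.cast_abs]
    exact hnum.trans (Int.le_ceil _)
  exact ⟨abs_le.1 (by exact_mod_cast hK), hden⟩

def approxExponent (ξ : ℝ) (n : ℕ) : ℝ :=
  2 + Real.log (partialQuotient ξ (n + 1)) / Real.log ((GenContFract.of ξ).dens n)

lemma two_le_approxExponent {ξ : ℝ} (hξ : Irrational ξ) (n : ℕ) : 2 ≤ approxExponent ξ n :=
  le_add_of_nonneg_right (div_nonneg (Real.log_nonneg (one_le_partialQuotient_succ hξ n))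
    (Real.log_nonneg (one_le_of_dens hξ n)))

lemma of_dens_rpow_approxExponent {ξ : ℝ} (hξ : Irrational ξ) {n : ℕ} (hn : 2 ≤ n) :
    (GenContFract.of ξ).dens n ^ approxExponent ξ n =
      partialQuotient ξ (n + 1) * (GenContFract.of ξ).dens n ^ 2 := by
  have hB := one_lt_of_dens hξ hn
  have ha := one_le_partialQuotient_succ hξ n
  exact rpow_two_add_log_div_log (by linarith) hB.ne' (by linarith)

lemma mem_muSet_of_frequently_lt {ξ c : ℝ} (hξ : Irrational ξ)
    (h : ∃ᶠ n in atTop, c < approxExponent ξ n) : c ∈ muSet ξ := by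
  set T := {n | c < approxExponent ξ n ∧ 2 ≤ n}
  have hT : T.Infinite :=
    Nat.frequently_atTop_iff_infinite.1 (h.and_eventually (eventually_ge_atTop 2))
  have hinj : Set.InjOn ξ.convergent T := fun m hm n hn hmn =>
    (strictMonoOn_of_dens hξ).injOn (Set.mem_Ici.2 (by linarith [hm.2]))
      (Set.mem_Ici.2 (by linarith [hn.2]))
      (by rw [← den_convergent_eq_of_dens hξ, ← den_convergent_eq_of_dens hξ, hmn])
  refine Set.Infinite.mono ?_ (hT.image hinj)
  rintro _ ⟨n, ⟨hc, hn⟩, rfl⟩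
  have hB := one_lt_of_dens hξ hn
  show |ξ - ξ.convergent n| < 1 / ((ξ.convergent n).den : ℝ) ^ c
  rw [den_convergent_eq_of_dens hξ]
  calc |ξ - ξ.convergent n|
      ≤ 1 / (partialQuotient ξ (n + 1) * (GenContFract.of ξ).dens n ^ 2) :=
        abs_sub_convergent_le hξ n
    _ = 1 / (GenContFract.of ξ).dens n ^ approxExponent ξ n := by
        rw [of_dens_rpow_approxExponent hξ hn]
    _ < 1 / (GenContFract.of ξ).dens n ^ c :=
        one_div_lt_one_div_of_lt (by positivity) ((Real.rpow_lt_rpow_left_iff hB).2 hc)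

lemma eventually_one_div_rpow_lt_abs_sub_convergent {ξ c ρ : ℝ} (hξ : Irrational ξ)
    (h : ∀ᶠ n in atTop, approxExponent ξ n < c) (hcρ : c < ρ) :
    ∀ᶠ n in atTop, 1 / ((ξ.convergent n).den : ℝ) ^ ρ < |ξ - ξ.convergent n| := by
  have hlarge : ∀ᶠ n in atTop, 3 < (GenContFract.of ξ).dens n ^ (ρ - c) :=
    ((tendsto_rpow_atTop (sub_pos.2 hcρ)).comp (tendsto_of_dens_atTop hξ)).eventually_gt_atTop 3
  filter_upwards [h, hlarge, eventually_ge_atTop 2] with n hc h3 hn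
  rw [den_convergent_eq_of_dens hξ]
  have hB := one_lt_of_dens hξ hn
  have ha := one_le_partialQuotient_succ hξ n
  set B := (GenContFract.of ξ).dens n
  set a : ℝ := (partialQuotient ξ (n + 1) : ℝ)
  have hBc : a * B ^ 2 < B ^ c := by
    rw [← of_dens_rpow_approxExponent hξ hn]
    exact (Real.rpow_lt_rpow_left_iff hB).2 hc
  have hBρ : 3 * B ^ c < B ^ ρ := by
    rw [show ρ = (ρ - c) + c by ring, Real.rpow_add (by linarith)]
    nlinarith [Real.rpow_pos_of_pos (zero_lt_one.trans hB) c]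
  calc 1 / B ^ ρ < 1 / ((a + 2) * B ^ 2) :=
        one_div_lt_one_div_of_lt (by positivity)
          (by nlinarith [mul_nonneg (sub_nonneg.2 ha) (sq_nonneg B)])
    _ ≤ |ξ - ξ.convergent n| := one_div_le_abs_sub_convergent hξ n

lemma notMem_muSet_of_eventually_lt {ξ c ρ : ℝ} (hξ : Irrational ξ)
    (h : ∀ᶠ n in atTop, approxExponent ξ n < c) (hcρ : c < ρ) : ρ ∉ muSet ξ := by
  have h2ρ : 2 < ρ := by
    obtain ⟨n, hn⟩ := h.exists
    linarith [two_le_approxExponent hξ n]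
  obtain ⟨N, hN⟩ := eventually_atTop.1 (eventually_one_div_rpow_lt_abs_sub_convergent hξ h hcρ)
  obtain ⟨M, hM⟩ := eventually_atTop.1
    (((tendsto_rpow_atTop (sub_pos.2 h2ρ)).comp tendsto_natCast_atTop_atTop).eventually_gt_atTop 2)
  refine Set.not_infinite.2 (((finite_setOf_den_le_abs_sub_lt_one ξ M).union
    ((Set.finite_Iio N).image ξ.convergent)).subset fun r (hr : |ξ - r| < _) => ?_)
  have hd : (1 : ℝ) ≤ r.den := by exact_mod_cast r.pos
  rcases lt_or_ge r.den M with hsmall | hbig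
  · exact Or.inl ⟨hsmall.le, hr.trans_le
      (div_le_one_of_le₀ (Real.one_le_rpow hd (by linarith)) (by positivity))⟩
  · have hlegendre : 2 * (r.den : ℝ) ^ 2 < (r.den : ℝ) ^ ρ := by
      have h2 : 2 < (r.den : ℝ) ^ (ρ - 2) := hM r.den hbig
      rw [show ρ = (ρ - 2) + 2 by ring, Real.rpow_add (by linarith), Real.rpow_two]
      nlinarith [pow_pos (zero_lt_one.trans_le hd) 2]
    obtain ⟨n, rfl⟩ :=
      Real.exists_rat_eq_convergent (hr.trans (one_div_lt_one_div_of_lt (by positivity) hlegendre))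
    exact Or.inr ⟨n, lt_of_not_ge fun hn => (hN n hn).asymm hr, rfl⟩

theorem mu_eq_limsup_approxExponent {ξ : ℝ} (hξ : Irrational ξ) :
    mu ξ = limsup (fun n => (approxExponent ξ n : EReal)) atTop := by
  apply le_antisymm
  · refine sSup_le ?_
    rintro _ ⟨ρ, hρ, rfl⟩
    by_contra! hlt
    obtain ⟨c, hc, hcρ⟩ := EReal.exists_between_coe_real hlt
    exact notMem_muSet_of_eventually_lt hξ
      ((eventually_lt_of_limsup_lt hc).mono fun n hn => EReal.coe_lt_coe_iff.1 hn)
      (EReal.coe_lt_coe_iff.1 hcρ) hρ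
  · by_contra! hlt
    obtain ⟨c, hμc, hc⟩ := EReal.exists_between_coe_real hlt
    have hmem := mem_muSet_of_frequently_lt hξ
      ((frequently_lt_of_lt_limsup (by isBoundedDefault) hc).mono
        fun n hn => EReal.coe_lt_coe_iff.1 hn)
    exact hμc.not_ge (le_sSup ⟨c, hmem, rfl⟩)

/-- For an irrational `ξ` with partial quotients `a_n` and continuants `q_n`,
`μ(ξ) = limsup (2 + log a_{n+1} / log q_n)`. -/
theorem mu_eq_limsup_of_continued_fraction (ξ : ℝ) (hξ : Irrational ξ)
    (q : ℕ → ℤ) (hq0 : q 0 = 1) (hq1 : q 1 = partialQuotient ξ 1)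
    (hqrec : ∀ n : ℕ, q (n + 2) = partialQuotient ξ (n + 2) * q (n + 1) + q n) :
    mu ξ = Filter.limsup (fun n : ℕ =>
      (((2 : ℝ) + Real.log ((partialQuotient ξ (n + 1) : ℤ) : ℝ) /
        Real.log ((q n : ℤ) : ℝ) : ℝ) : EReal)) Filter.atTop := by
  have hq (n : ℕ) : ((q n : ℤ) : ℝ) = (GenContFract.of ξ).dens n :=
    (of_dens_eq_of_recurrence hξ q hq0 hq1 hqrec n).symm
  simp_rw [hq]
  exact mu_eq_limsup_approxExponent hξ

end
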